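/- Let Ω = [−1,1] with μ = (1/2)·Lebesgue measure, 𝒜 the σ-algebra generated by symmetric intervals (−a,a), and E the conditional expectation, given by E(f)(w) = (f(w)+f(−w))/2. Then |f| ≤ 2·E(|f|) a.e. for every integrable f, and consequently for any Young's function Φ, Φ(|f|) ≤ 2·E(Φ(|f|)) a.e., and the pair (E,Φ) satisfies the GCH-inequality with constant C = 4: E(|fg|) ≤ 4·Φ⁻¹(E(Φ(|f|)))·Φ*⁻¹(E(Φ*(|g|))). -/

import Mathlib

open MeasureTheory

/-- A Young's function: continuous, convex, even, vanishing only at `0`,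
with `Φ x / x → ∞` as `x → ∞`. -/
def IsYoung (Φ : ℝ → ℝ) : Prop :=
  Continuous Φ ∧ ConvexOn ℝ Set.univ Φ ∧ (∀ x, Φ x = 0 ↔ x = 0) ∧
    (∀ x, Φ (-x) = Φ x) ∧ Filter.Tendsto (fun x => Φ x / x) Filter.atTop Filter.atTop

/-- The complementary Young's function `Φ*(y) = sup { x·|y| − Φ(x) : x ≥ 0 }`. -/
noncomputable def complYoung (Φ : ℝ → ℝ) (y : ℝ) : ℝ :=
  sSup ((fun x => x * |y| - Φ x) '' Set.Ici (0 : ℝ))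

/-- The measure `μ = (1/2)·(Lebesgue measure on [−1,1])`. -/
noncomputable def symMeasure : Measure ℝ :=
  (2 : ENNReal)⁻¹ • (MeasureTheory.volume.restrict (Set.Icc (-1 : ℝ) 1))

/-- The conditional expectation with respect to the σ-algebra of symmetric sets:
`E(f)(w) = (f(w) + f(−w))/2`. -/
noncomputable def symCondExp (f : ℝ → ℝ) (w : ℝ) : ℝ := (f w + f (-w)) / 2

open Set

/-!
Since `E(h)(w) = (h(w) + h(−w))/2`, every nonnegative `h` satisfies `h ≤ 2 E(h)` pointwise; this
gives the first two claims. For the third, apply it to `Φ(|f|)` and `Φ*(|g|)` at `w` and `−w`, and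
invert with `Φ⁻¹`, `Φ*⁻¹`: both Young's functions satisfy `2 F(x) ≤ F(2x)` (for `Φ` by convexity and
`Φ(0) = 0`, for `Φ*` because `Φ ≥ 0`), so their inverses satisfy `F⁻¹(2a) ≤ 2 F⁻¹(a)`. Hence
`|f| ≤ 2 Φ⁻¹(E Φ(|f|))` and `|g| ≤ 2 Φ*⁻¹(E Φ*(|g|))` at `±w`, and averaging `|f g|` over `±w` gives
the constant `4`.
-/

theorem ConvexOn.map_smul_le_of_map_zero {E : Type*} [AddCommGroup E] [Module ℝ E] {s : Set E}
    {f : E → ℝ} (hf : ConvexOn ℝ s f) (h0 : (0 : E) ∈ s) (hf0 : f 0 = 0) {x : E} (hx : x ∈ s)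
    {t : ℝ} (ht0 : 0 ≤ t) (ht1 : t ≤ 1) : f (t • x) ≤ t * f x := by
  simpa [hf0] using hf.2 hx h0 ht0 (sub_nonneg.2 ht1) (add_sub_cancel t 1)

theorem MonotoneOn.of_rightInvOn {α β : Type*} [LinearOrder α] [PartialOrder β] {F : α → β}
    {G : β → α} {s : Set α} {t : Set β} (hF : MonotoneOn F s) (hG : MapsTo G t s)
    (hFG : RightInvOn G F t) : MonotoneOn G t := by
  intro a ha b hb hab
  by_contra! hlt
  have hba : b ≤ a := by simpa only [hFG ha, hFG hb] using hF (hG hb) (hG ha) hlt.le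
  exact hlt.ne (congrArg G (le_antisymm hab hba)).symm

theorem le_two_mul_of_map_le_two_mul {F G : ℝ → ℝ} (hF : MonotoneOn F (Ici 0))
    (hF_two_mul : ∀ x, 0 ≤ x → 2 * F x ≤ F (2 * x)) (hF_maps : MapsTo F (Ici 0) (Ici 0))
    (hG_maps : MapsTo G (Ici 0) (Ici 0)) (hGF : InvOn G F (Ici 0) (Ici 0)) {x a : ℝ}
    (hx : 0 ≤ x) (h : F x ≤ 2 * a) : x ≤ 2 * G a := by
  have hG : MonotoneOn G (Ici 0) := hF.of_rightInvOn hG_maps hGF.2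
  have hFx : 0 ≤ F x := hF_maps hx
  have h2a : 0 ≤ 2 * a := hFx.trans h
  have h2Ga : 0 ≤ 2 * G a := mul_nonneg zero_le_two (hG_maps (by linarith : 0 ≤ a))
  have h2a_le : 2 * a ≤ F (2 * G a) := by
    simpa only [hGF.2 (by linarith : 0 ≤ a)] using hF_two_mul (G a) (by linarith)
  calc x = G (F x) := (hGF.1 hx).symm
    _ ≤ G (2 * a) := hG hFx h2a h
    _ ≤ G (F (2 * G a)) := hG h2a (hF_maps h2Ga) h2a_le
    _ = 2 * G a := hGF.1 h2Ga

namespace IsYoung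

variable {Φ : ℝ → ℝ}

theorem map_zero (hΦ : IsYoung Φ) : Φ 0 = 0 := (hΦ.2.2.1 0).2 rfl

theorem nonneg (hΦ : IsYoung Φ) (x : ℝ) : 0 ≤ Φ x := by
  have hmid := hΦ.2.1.2 (mem_univ x) (mem_univ (-x)) (by norm_num : (0 : ℝ) ≤ 1 / 2)
    (by norm_num : (0 : ℝ) ≤ 1 / 2) (by norm_num)
  rw [show (1 / 2 : ℝ) • x + (1 / 2 : ℝ) • -x = 0 by module, hΦ.map_zero, hΦ.2.2.2.1,
    smul_eq_mul] at hmid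
  linarith

theorem two_mul_le (hΦ : IsYoung Φ) (x : ℝ) : 2 * Φ x ≤ Φ (2 * x) := by
  have hhalf := hΦ.2.1.map_smul_le_of_map_zero (mem_univ 0) hΦ.map_zero (mem_univ (2 * x))
    (t := 1 / 2) (by norm_num) (by norm_num)
  rw [smul_eq_mul, ← mul_assoc, one_div_mul_cancel two_ne_zero, one_mul] at hhalf
  linarith

theorem monotoneOn (hΦ : IsYoung Φ) : MonotoneOn Φ (Ici 0) := by
  intro x hx y hy hxy
  rcases (mem_Ici.1 hy).eq_or_lt with rfl | hy0
  · rw [le_antisymm hxy hx]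
  have hxy' : x / y ≤ 1 := div_le_one_of_le₀ hxy hy0.le
  calc Φ x = Φ ((x / y) • y) := by rw [smul_eq_mul, div_mul_cancel₀ _ hy0.ne']
    _ ≤ x / y * Φ y := hΦ.2.1.map_smul_le_of_map_zero (mem_univ 0) hΦ.map_zero (mem_univ y)
      (div_nonneg hx hy0.le) hxy'
    _ ≤ Φ y := mul_le_of_le_one_left (hΦ.nonneg y) hxy'

theorem bddAbove_complYoung (hΦ : IsYoung Φ) (y : ℝ) :
    BddAbove ((fun x => x * |y| - Φ x) '' Ici 0) := by
  obtain ⟨M, hM⟩ := Filter.eventually_atTop.1 (hΦ.2.2.2.2.eventually_ge_atTop |y|)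
  refine ⟨max M 1 * |y|, ?_⟩
  rintro _ ⟨x, hx, rfl⟩
  rcases le_or_gt x (max M 1) with hxM | hxM
  · nlinarith [hΦ.nonneg x, abs_nonneg y]
  · have hx0 : 0 < x := (zero_lt_one.trans_le (le_max_right M 1)).trans hxM
    have hlin : |y| * x ≤ Φ x := (le_div_iff₀ hx0).1 (hM x ((le_max_left M 1).trans hxM.le))
    nlinarith [abs_nonneg y, le_max_right M 1]

theorem le_complYoung (hΦ : IsYoung Φ) {x : ℝ} (hx : 0 ≤ x) (y : ℝ) :
    x * |y| - Φ x ≤ complYoung Φ y :=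
  le_csSup (hΦ.bddAbove_complYoung y) ⟨x, hx, rfl⟩

theorem complYoung_nonneg (hΦ : IsYoung Φ) (y : ℝ) : 0 ≤ complYoung Φ y := by
  simpa [hΦ.map_zero] using hΦ.le_complYoung le_rfl y

theorem monotoneOn_complYoung (hΦ : IsYoung Φ) : MonotoneOn (complYoung Φ) (Ici 0) := by
  intro a ha b hb hab
  refine csSup_le (nonempty_Ici.image _) ?_
  rintro _ ⟨x, hx, rfl⟩
  refine le_trans ?_ (hΦ.le_complYoung hx b)
  rw [abs_of_nonneg ha, abs_of_nonneg hb]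
  linarith [mul_le_mul_of_nonneg_left hab hx]

theorem two_mul_complYoung_le (hΦ : IsYoung Φ) (y : ℝ) :
    2 * complYoung Φ y ≤ complYoung Φ (2 * y) := by
  rw [← le_div_iff₀' two_pos]
  refine csSup_le (nonempty_Ici.image _) ?_
  rintro _ ⟨x, hx, rfl⟩
  have h2y := hΦ.le_complYoung hx (2 * y)
  rw [abs_mul, abs_two] at h2y
  linarith [hΦ.nonneg x]

end IsYoung

theorem symCondExp_neg (f : ℝ → ℝ) (w : ℝ) : symCondExp f (-w) = symCondExp f w := by
  rw [symCondExp, symCondExp, neg_neg, add_comm]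

theorem le_two_mul_symCondExp (f : ℝ → ℝ) {w : ℝ} (h : 0 ≤ f (-w)) :
    f w ≤ 2 * symCondExp f w := by
  rw [symCondExp]
  linarith

theorem symCondExp_le {f : ℝ → ℝ} {w c : ℝ} (h : f w ≤ c) (h' : f (-w) ≤ c) :
    symCondExp f w ≤ c := by
  rw [symCondExp]
  linarith

/-- Example 2.10: on `Ω = [−1,1]` with `μ = (1/2)·Lebesgue` and `E` the
symmetrization conditional expectation, `|f| ≤ 2 E(|f|)` a.e.; consequently for
any Young's function `Φ`, `Φ(|f|) ≤ 2 E(Φ(|f|))` a.e., and `(E, Φ)` satisfies the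
GCH-inequality with constant `4`:
`E(|fg|) ≤ 4 Φ⁻¹(E(Φ(|f|))) Φ*⁻¹(E(Φ*(|g|)))` a.e.
Here `ψ` and `ψs` are the inverses of `Φ` and `Φ*` on `[0,∞)`. -/
theorem symmetric_condexp_GCH (Φ ψ ψs : ℝ → ℝ) (hΦ : IsYoung Φ)
    (hψ_nonneg : ∀ a : ℝ, 0 ≤ a → 0 ≤ ψ a)
    (hψ_right : ∀ a : ℝ, 0 ≤ a → Φ (ψ a) = a)
    (hψ_left : ∀ x : ℝ, 0 ≤ x → ψ (Φ x) = x)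
    (hψs_nonneg : ∀ a : ℝ, 0 ≤ a → 0 ≤ ψs a)
    (hψs_right : ∀ a : ℝ, 0 ≤ a → complYoung Φ (ψs a) = a)
    (hψs_left : ∀ x : ℝ, 0 ≤ x → ψs (complYoung Φ x) = x) :
    (∀ f : ℝ → ℝ, Integrable f symMeasure →
      ∀ᵐ w ∂symMeasure, |f w| ≤ 2 * symCondExp (fun x => |f x|) w) ∧
    (∀ f : ℝ → ℝ, ∀ᵐ w ∂symMeasure,
      Φ |f w| ≤ 2 * symCondExp (fun x => Φ |f x|) w) ∧
    (∀ f g : ℝ → ℝ, ∀ᵐ w ∂symMeasure,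
      symCondExp (fun x => |f x * g x|) w ≤
        4 * ψ (symCondExp (fun x => Φ |f x|) w) *
          ψs (symCondExp (fun x => complYoung Φ |g x|) w)) := by
  refine ⟨fun f _ => .of_forall fun w => le_two_mul_symCondExp (fun x => |f x|) (abs_nonneg _),
    fun f => .of_forall fun w => le_two_mul_symCondExp (fun x => Φ |f x|) (hΦ.nonneg _),
    fun f g => .of_forall fun w => ?_⟩
  have hf : ∀ u, |f u| ≤ 2 * ψ (symCondExp (fun x => Φ |f x|) u) := fun u =>
    le_two_mul_of_map_le_two_mul hΦ.monotoneOn (fun x _ => hΦ.two_mul_le x)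
      (fun x _ => hΦ.nonneg x) hψ_nonneg ⟨hψ_left, hψ_right⟩
      (abs_nonneg _)
      (le_two_mul_symCondExp (fun x => Φ |f x|) (hΦ.nonneg _))
  have hg : ∀ u, |g u| ≤ 2 * ψs (symCondExp (fun x => complYoung Φ |g x|) u) := fun u =>
    le_two_mul_of_map_le_two_mul hΦ.monotoneOn_complYoung
      (fun y _ => hΦ.two_mul_complYoung_le y) (fun y _ => hΦ.complYoung_nonneg y)
      hψs_nonneg ⟨hψs_left, hψs_right⟩ (abs_nonneg _)
      (le_two_mul_symCondExp (fun x => complYoung Φ |g x|) (hΦ.complYoung_nonneg _))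
  have hfg : ∀ u, |f u * g u| ≤ 4 * ψ (symCondExp (fun x => Φ |f x|) u) *
      ψs (symCondExp (fun x => complYoung Φ |g x|) u) := fun u => calc
    |f u * g u| = |f u| * |g u| := abs_mul _ _
    _ ≤ 2 * ψ (symCondExp (fun x => Φ |f x|) u) *
        (2 * ψs (symCondExp (fun x => complYoung Φ |g x|) u)) :=
      mul_le_mul (hf u) (hg u) (abs_nonneg _) ((abs_nonneg _).trans (hf u))
    _ = _ := by ring
  exact symCondExp_le (hfg w) (by simpa only [symCondExp_neg] using hfg (-w))
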